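/- Let G be a finite group and G ⟳ V a representation on a finite-dimensional complex vector space with homogeneous basic invariants σ = (σ_1,…,σ_n). Let I ⊆ ℝ be a bounded interval, c : I → σ(V) continuous, and let c̄_1, c̄_2 : I → V be two continuous lifts of c over σ. If c̄_1 is absolutely continuous and c̄_1 ∈ W^{1,p}(I, V) for some 1 ≤ p ≤ ∞, then c̄_2 is absolutely continuous, c̄_2 ∈ W^{1,p}(I, V), and ‖c̄_2′‖_{L^p(I)} ≤ C ‖c̄_1′‖_{L^p(I)}, where C depends only on the representation G ⟳ V and on the chosen coordinate system (norm) on V. Moreover, at almost every t the derivative satisfies c̄_2′(t) ∈ G_{v} c̄_1′(t) after the lifts are matched at t, i.e., c̄_2′(t) = g c̄_1′(t) for some g in the isotropy group of a common value. -/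

import Mathlib

/-!
The basic invariants separate `G`-orbits (average over `G` a polynomial that is `1` at one
point and `0` on the rest of the two orbits), so `c̄₂ t = g c̄₁ t` for some `g` at every `t`, and
the sets `A g = {t | c̄₂ t = g c̄₁ t}` are closed and cover `I`. Inside `[a, b] ⊆ I` one walks
from `a` to `b` along a monotone chain whose consecutive points lie in a common `A g`; this bounds
`‖c̄₂ b - c̄₂ a‖` by `C` times the increments of `c̄₁` over a refinement of `[a, b]`, which
transfers absolute continuity from `c̄₁` to `c̄₂`. At a point of `A g` that is not isolated in
`A g` the curves `c̄₂` and `g c̄₁` agree along a set accumulating there, so their derivatives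
agree; isolated points are countable, hence `c̄₂' = g c̄₁'` almost everywhere, and the `L^p`
statements follow from `‖g v‖ ≤ C ‖v‖`.
-/

open MeasureTheory Set
open scoped ENNReal NNReal

noncomputable section

/-- The Lipschitz seminorm (best Lipschitz constant) of `f` on `s`. -/
def lipConstOn {E : Type*} [NormedAddCommGroup E] (f : ℝ → E) (s : Set ℝ) : ℝ :=
  sInf {C : ℝ | 0 ≤ C ∧ ∀ x ∈ s, ∀ y ∈ s, ‖f x - f y‖ ≤ C * |x - y|}

/-- `f` is of class `C^{k,1}` on `s`: it is `C^k` and the `k`-th derivative is Lipschitz. -/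
def CkLipOn {E : Type*} [NormedAddCommGroup E] [NormedSpace ℝ E] (k : ℕ) (f : ℝ → E)
    (s : Set ℝ) : Prop :=
  ContDiffOn ℝ k f s ∧ ∃ C : ℝ, 0 ≤ C ∧ ∀ x ∈ s, ∀ y ∈ s,
    ‖iteratedDerivWithin k f s x - iteratedDerivWithin k f s y‖ ≤ C * |x - y|

/-- The `C^{k,1}` norm of `f` on `s`:
`max_{j ≤ k} sup_s ‖f^{(j)}‖ + Lip_s (f^{(k)})`. -/
def ckLipNorm {E : Type*} [NormedAddCommGroup E] [NormedSpace ℝ E] (k : ℕ) (f : ℝ → E)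
    (s : Set ℝ) : ℝ :=
  (⨆ j : Fin (k + 1), ⨆ x : s, ‖iteratedDerivWithin (j : ℕ) f s (x : ℝ)‖) +
    lipConstOn (iteratedDerivWithin k f s) s

/-- Absolute continuity of `f` on a set `s ⊆ ℝ`. -/
def AbsolutelyContinuousOn {E : Type*} [NormedAddCommGroup E] (f : ℝ → E) (s : Set ℝ) : Prop :=
  ∀ ε > (0 : ℝ), ∃ δ > (0 : ℝ), ∀ (m : ℕ) (a b : Fin m → ℝ),
    (∀ i, a i ≤ b i) → (∀ i, Set.Icc (a i) (b i) ⊆ s) →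
    (Pairwise fun i j => Set.Ioo (a i) (b i) ∩ Set.Ioo (a j) (b j) = ∅) →
    (∑ i, (b i - a i)) < δ → (∑ i, ‖f (b i) - f (a i)‖) < ε

/-- The polynomial map `V = ℂ^N → ℂ^n` associated with a family of polynomials. -/
def polyMap {N n : ℕ} (σ : Fin n → MvPolynomial (Fin N) ℂ) (v : Fin N → ℂ) : Fin n → ℂ :=
  fun j => MvPolynomial.eval v (σ j)

/-- `σ` is a system of basic invariants for the representation `ρ` of `G` on `ℂ^N`:
each `σ j` is `G`-invariant, and every `G`-invariant polynomial lies in the subalgebra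
generated by the `σ j`. -/
def IsBasicInvariantSystem {G : Type*} [Group G] {N n : ℕ}
    (ρ : Representation ℂ G (Fin N → ℂ)) (σ : Fin n → MvPolynomial (Fin N) ℂ) : Prop :=
  (∀ j g v, MvPolynomial.eval (ρ g v) (σ j) = MvPolynomial.eval v (σ j)) ∧
  (∀ q : MvPolynomial (Fin N) ℂ,
    (∀ g v, MvPolynomial.eval (ρ g v) q = MvPolynomial.eval v q) →
      q ∈ Algebra.adjoin ℂ (Set.range σ))


open Filter Topology

namespace MvPolynomial

variable {K ι : Type*} [Field K]

theorem exists_eval_eq_one_of_notMem (T : Finset (ι → K)) {w : ι → K} (hw : w ∉ T) :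
    ∃ f : MvPolynomial ι K, eval w f = 1 ∧ ∀ u ∈ T, eval u f = 0 := by
  classical
  induction T using Finset.induction with
  | empty => exact ⟨1, by simp, by simp⟩
  | insert u T _ ih =>
    obtain ⟨f, hf₁, hf₀⟩ := ih fun h => hw (Finset.mem_insert_of_mem h)
    obtain ⟨i, hi⟩ : ∃ i, w i ≠ u i :=
      Function.ne_iff.1 fun h => hw (h ▸ Finset.mem_insert_self u T)
    refine ⟨f * (C (w i - u i)⁻¹ * (X i - C (u i))), ?_, ?_⟩
    · simp [hf₁, sub_ne_zero.2 hi]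
    · simp only [Finset.mem_insert, forall_eq_or_imp]
      exact ⟨by simp, fun x hx => by simp [hf₀ x hx]⟩

variable [Fintype ι] [DecidableEq ι]

def compLinearMap (f : MvPolynomial ι K) (L : (ι → K) →ₗ[K] ι → K) : MvPolynomial ι K :=
  bind₁ (fun i => ∑ j, C (LinearMap.toMatrix' L i j) * X j) f

@[simp]
theorem eval_compLinearMap (f : MvPolynomial ι K) (L : (ι → K) →ₗ[K] ι → K) (v : ι → K) :
    eval v (f.compLinearMap L) = eval (L v) f := by
  change aeval v (bind₁ _ f) = aeval (L v) f
  have hL : (fun i => aeval v (∑ j, C (LinearMap.toMatrix' L i j) * X j)) = L v := by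
    ext i
    conv_rhs => rw [← LinearMap.toMatrix'_mulVec]
    simp only [map_sum, map_mul, aeval_C, aeval_X, Algebra.algebraMap_self, RingHom.id_apply,
      Matrix.mulVec, dotProduct]
  rw [aeval_bind₁, hL]

end MvPolynomial

namespace Representation

open MvPolynomial

variable {G K ι : Type*} [Group G] [Fintype G] [Field K] [Fintype ι] [DecidableEq ι]
  (ρ : Representation K G (ι → K))

/-- The Reynolds operator, without the factor `1 / |G|`. -/
def average (f : MvPolynomial ι K) : MvPolynomial ι K :=
  ∑ g : G, f.compLinearMap (ρ g)

theorem eval_average (f : MvPolynomial ι K) (v : ι → K) :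
    eval v (ρ.average f) = ∑ g : G, eval (ρ g v) f := by
  simp [average]

theorem eval_average_apply_eq (f : MvPolynomial ι K) (h : G) (v : ι → K) :
    eval (ρ h v) (ρ.average f) = eval v (ρ.average f) := by
  simp only [eval_average]
  refine Fintype.sum_equiv (Equiv.mulRight h) _ _ fun g => ?_
  simp [map_mul]

theorem exists_invariant_eval_ne [CharZero K] {v w : ι → K} (hvw : ∀ g, ρ g v ≠ w) :
    ∃ q : MvPolynomial ι K, (∀ g x, eval (ρ g x) q = eval x q) ∧ eval v q ≠ eval w q := by
  classical
  obtain ⟨f, hf₁, hf₀⟩ := exists_eval_eq_one_of_notMem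
    (((Finset.univ.image fun g => ρ g v) ∪ (Finset.univ.image fun g => ρ g w)).erase w)
    (Finset.notMem_erase w _)
  refine ⟨ρ.average f, ρ.eval_average_apply_eq f, ?_⟩
  have hv : eval v (ρ.average f) = 0 := by
    rw [eval_average]
    exact Finset.sum_eq_zero fun g _ => hf₀ _ (by simp [hvw g])
  have hw : eval w (ρ.average f) = (Finset.univ.filter fun g => ρ g w = w).card := by
    rw [eval_average, Finset.card_filter, Nat.cast_sum]
    refine Finset.sum_congr rfl fun g _ => ?_
    by_cases h : ρ g w = w
    · simp [h, hf₁]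
    · simp [h, hf₀ _ (by simp [h] : ρ g w ∈ _)]
  rw [hv, hw, ne_comm, Nat.cast_ne_zero, ← Nat.pos_iff_ne_zero, Finset.card_pos]
  exact ⟨1, by simp⟩

end Representation

theorem IsBasicInvariantSystem.exists_eq_of_polyMap_eq {G : Type*} [Group G] [Fintype G]
    {N n : ℕ} {ρ : Representation ℂ G (Fin N → ℂ)} {σ : Fin n → MvPolynomial (Fin N) ℂ}
    (hσ : IsBasicInvariantSystem ρ σ) {v w : Fin N → ℂ} (hvw : polyMap σ v = polyMap σ w) :
    ∃ g, ρ g v = w := by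
  by_contra! hne
  obtain ⟨q, hq, hqvw⟩ := ρ.exists_invariant_eval_ne hne
  have hagree : Set.EqOn (MvPolynomial.aeval v) (MvPolynomial.aeval w)
      (Algebra.adjoin ℂ (Set.range σ) : Set (MvPolynomial (Fin N) ℂ)) :=
    AlgHom.eqOn_adjoin_iff.2 (Set.forall_mem_range.2 (congrFun hvw))
  exact hqvw (hagree (hσ.2 q hq))

theorem Relation.ReflTransGen.exists_seq {α : Type*} {r : α → α → Prop} {a b : α}
    (h : Relation.ReflTransGen r a b) :
    ∃ (k : ℕ) (u : ℕ → α), u 0 = a ∧ u k = b ∧ ∀ j < k, r (u j) (u (j + 1)) := by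
  induction h with
  | refl => exact ⟨0, fun _ => a, rfl, rfl, by simp⟩
  | @tail b c _ hbc ih =>
    obtain ⟨k, u, hu0, huk, hu⟩ := ih
    refine ⟨k + 1, Function.update u (k + 1) c, by simp [hu0], by simp, fun j hj => ?_⟩
    rcases Nat.lt_succ_iff_lt_or_eq.1 hj with hj | rfl
    · rw [Function.update_of_ne (by omega), Function.update_of_ne (by omega)]
      exact hu j hj
    · simpa [huk] using hbc

theorem exists_mem_inter_nonempty_of_mem_closure {X ι : Type*} [TopologicalSpace X] [Finite ι]
    {A : ι → Set X} (hA : ∀ i, IsClosed (A i)) {S : Set X} (hS : S ⊆ ⋃ i, A i) {x : X}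
    (hx : x ∈ closure S) : ∃ i, x ∈ A i ∧ (S ∩ A i).Nonempty := by
  have : S = ⋃ i, S ∩ A i := by rw [← inter_iUnion, inter_eq_left.2 hS]
  rw [this, closure_iUnion_of_finite, mem_iUnion] at hx
  obtain ⟨i, hi⟩ := hx
  exact ⟨i, (hA i).closure_subset (closure_mono inter_subset_right hi),
    closure_nonempty_iff.1 ⟨x, hi⟩⟩

theorem reflTransGen_of_isClosed_cover {ι : Type*} [Finite ι] {A : ι → Set ℝ}
    (hA : ∀ i, IsClosed (A i)) {a b : ℝ} (hab : a ≤ b) (hcov : Icc a b ⊆ ⋃ i, A i) :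
    Relation.ReflTransGen (fun x y => x ≤ y ∧ ∃ i, x ∈ A i ∧ y ∈ A i) a b := by
  set W := {t ∈ Icc a b | Relation.ReflTransGen (fun x y => x ≤ y ∧ ∃ i, x ∈ A i ∧ y ∈ A i) a t}
  have haW : a ∈ W := ⟨⟨le_rfl, hab⟩, .refl⟩
  have hW : BddAbove W := ⟨b, fun t ht => ht.1.2⟩
  set s := sSup W
  have hs : s ∈ Icc a b := ⟨le_csSup hW haW, csSup_le ⟨a, haW⟩ fun t ht => ht.1.2⟩
  -- the supremum is reached from a point of `W` sharing one of the sets `A i`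
  have hsW : s ∈ W := by
    obtain ⟨i, hsi, t, htW, hti⟩ := exists_mem_inter_nonempty_of_mem_closure hA
      (fun t ht => hcov ht.1) (csSup_mem_closure ⟨a, haW⟩ hW)
    exact ⟨hs, htW.2.tail ⟨le_csSup hW htW, i, hti, hsi⟩⟩
  -- if `s < b`, a point of `(s, b]` sharing a set `A i` with `s` would lie in `W`
  obtain hsb | hsb := hs.2.eq_or_lt
  · exact hsb ▸ hsW.2
  obtain ⟨i, hsi, t, ht, hti⟩ := exists_mem_inter_nonempty_of_mem_closure hA
    (fun t ht => hcov ⟨hs.1.trans ht.1.le, ht.2⟩)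
    (show s ∈ closure (Ioc s b) by rw [closure_Ioc hsb.ne]; exact ⟨le_rfl, hsb.le⟩)
  have htW : t ∈ W := ⟨⟨hs.1.trans ht.1.le, ht.2⟩, hsW.2.tail ⟨ht.1.le, i, hsi, hti⟩⟩
  exact absurd (le_csSup hW htW) (not_le.2 ht.1)

theorem exists_monotone_chain_of_isClosed_cover {ι : Type*} [Finite ι] {A : ι → Set ℝ}
    (hA : ∀ i, IsClosed (A i)) {a b : ℝ} (hab : a ≤ b) (hcov : Icc a b ⊆ ⋃ i, A i) :
    ∃ (k : ℕ) (u : ℕ → ℝ), Monotone u ∧ u 0 = a ∧ u k = b ∧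
      ∀ j < k, ∃ i, u j ∈ A i ∧ u (j + 1) ∈ A i := by
  obtain ⟨k, u, hu0, huk, hu⟩ := (reflTransGen_of_isClosed_cover hA hab hcov).exists_seq
  refine ⟨k, fun j => u (min j k), monotone_nat_of_le_succ fun j => ?_, by simpa using hu0,
    by simpa using huk, fun j hj => ?_⟩
  · rcases lt_or_ge j k with hj | hj
    · simpa [min_eq_left hj.le, min_eq_left (Nat.succ_le_of_lt hj)] using (hu j hj).1
    · simp [min_eq_right hj, min_eq_right (hj.trans (Nat.le_succ j))]
  · simpa [min_eq_left hj.le, min_eq_left (Nat.succ_le_of_lt hj)] using (hu j hj).2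

section AbsolutelyContinuous

variable {E F : Type*} [NormedAddCommGroup E] [NormedAddCommGroup F] {f : ℝ → E} {s : Set ℝ}

theorem exists_chain_norm_sub_le {ι : Type*} [Finite ι] {φ : ι → E → F} {K : ℝ≥0}
    (hφ : ∀ i, LipschitzWith K (φ i)) {f₁ : ℝ → E} {f₂ : ℝ → F} {a b : ℝ} (hab : a ≤ b)
    (hf₁ : ContinuousOn f₁ (Icc a b)) (hf₂ : ContinuousOn f₂ (Icc a b))
    (h : ∀ t ∈ Icc a b, ∃ i, f₂ t = φ i (f₁ t)) :
    ∃ (k : ℕ) (u : ℕ → ℝ), Monotone u ∧ u 0 = a ∧ u k = b ∧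
      ‖f₂ b - f₂ a‖ ≤ K * ∑ j ∈ Finset.range k, ‖f₁ (u (j + 1)) - f₁ (u j)‖ := by
  obtain ⟨k, u, hu, hu0, huk, hstep⟩ := exists_monotone_chain_of_isClosed_cover
    (A := fun i => {t ∈ Icc a b | f₂ t = φ i (f₁ t)})
    (fun i => isClosed_Icc.isClosed_eq hf₂ ((hφ i).continuous.comp_continuousOn hf₁)) hab
    fun t ht => by obtain ⟨i, hi⟩ := h t ht; exact mem_iUnion.2 ⟨i, ht, hi⟩
  refine ⟨k, u, hu, hu0, huk, ?_⟩
  calc ‖f₂ b - f₂ a‖ = ‖∑ j ∈ Finset.range k, (f₂ (u (j + 1)) - f₂ (u j))‖ := by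
        rw [Finset.sum_range_sub (fun j => f₂ (u j)), huk, hu0]
    _ ≤ ∑ j ∈ Finset.range k, K * ‖f₁ (u (j + 1)) - f₁ (u j)‖ := by
        refine (norm_sum_le _ _).trans (Finset.sum_le_sum fun j hj => ?_)
        obtain ⟨i, ⟨-, hi₀⟩, ⟨-, hi₁⟩⟩ := hstep j (Finset.mem_range.1 hj)
        rw [hi₀, hi₁, ← dist_eq_norm, ← dist_eq_norm]
        exact (hφ i).dist_le_mul _ _
    _ = K * ∑ j ∈ Finset.range k, ‖f₁ (u (j + 1)) - f₁ (u j)‖ := (Finset.mul_sum ..).symm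

theorem AbsolutelyContinuousOn.exists_pos_forall_fintype (hf : AbsolutelyContinuousOn f s)
    {ε : ℝ} (hε : 0 < ε) :
    ∃ δ > 0, ∀ (ι : Type) [Fintype ι] (a b : ι → ℝ), (∀ i, a i ≤ b i) →
      (∀ i, Icc (a i) (b i) ⊆ s) →
      (Pairwise fun i j => Disjoint (Ioo (a i) (b i)) (Ioo (a j) (b j))) →
      ∑ i, (b i - a i) < δ → ∑ i, ‖f (b i) - f (a i)‖ < ε := by
  obtain ⟨δ, hδ, hf⟩ := hf ε hε
  refine ⟨δ, hδ, fun ι _ a b hab has hdisj hlen => ?_⟩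
  let e := (Fintype.equivFin ι).symm
  have := hf _ (fun i => a (e i)) (fun i => b (e i)) (fun i => hab _) (fun i => has _)
    (fun i j hij => disjoint_iff_inter_eq_empty.1 (hdisj (e.injective.ne hij)))
    (by rwa [e.sum_comp (fun i => b i - a i)])
  rwa [e.sum_comp (fun i => ‖f (b i) - f (a i)‖)] at this

theorem AbsolutelyContinuousOn.of_forall_exists_eq_comp {ι : Type*} [Finite ι]
    {φ : ι → E → F} {K : ℝ≥0} (hφ : ∀ i, LipschitzWith K (φ i)) {f₁ : ℝ → E} {f₂ : ℝ → F}
    (hf₁ : AbsolutelyContinuousOn f₁ s) (hc₁ : ContinuousOn f₁ s)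
    (hc₂ : ContinuousOn f₂ s) (h : ∀ t ∈ s, ∃ i, f₂ t = φ i (f₁ t)) :
    AbsolutelyContinuousOn f₂ s := by
  intro ε hε
  obtain ⟨δ, hδ, hf₁⟩ := hf₁.exists_pos_forall_fintype (ε := ε / (K + 1)) (by positivity)
  refine ⟨δ, hδ, fun m a b hab has hdisj hlen => ?_⟩
  choose k u hu hu0 huk hle using fun i => exists_chain_norm_sub_le hφ (hab i)
    (hc₁.mono (has i)) (hc₂.mono (has i)) fun t ht => h t (has i ht)
  -- the chains refine `[a i, b i]` into the pieces `[u i j, u i (j + 1)]`, `j < k i`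
  have hpiece (i : Fin m) (j : Fin (k i)) : a i ≤ u i j ∧ u i (j + 1) ≤ b i :=
    ⟨hu0 i ▸ hu i (Nat.zero_le _), huk i ▸ hu i j.isLt⟩
  have hf₁' := hf₁ (Σ i, Fin (k i)) (fun x => u x.1 x.2) (fun x => u x.1 (x.2 + 1))
    (fun x => hu x.1 (Nat.le_succ _))
    (fun x => (Icc_subset_Icc (hpiece x.1 x.2).1 (hpiece x.1 x.2).2).trans (has x.1)) ?_ ?_
  · calc ∑ i, ‖f₂ (b i) - f₂ (a i)‖
        ≤ ∑ i, K * ∑ j ∈ Finset.range (k i), ‖f₁ (u i (j + 1)) - f₁ (u i j)‖ :=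
          Finset.sum_le_sum fun i _ => hle i
      _ = K * ∑ x : Σ i, Fin (k i), ‖f₁ (u x.1 (x.2 + 1)) - f₁ (u x.1 x.2)‖ := by
          rw [Fintype.sum_sigma, Finset.mul_sum]
          refine Finset.sum_congr rfl fun i _ => ?_
          rw [Fin.sum_univ_eq_sum_range (fun j => ‖f₁ (u i (j + 1)) - f₁ (u i j)‖)]
      _ ≤ K * (ε / (K + 1)) := by gcongr
      _ < ε := by
          rw [mul_div_assoc', div_lt_iff₀ (by positivity)]
          nlinarith [K.coe_nonneg]
  · rintro ⟨i, j⟩ ⟨i', j'⟩ hne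
    obtain rfl | hi := eq_or_ne i i'
    · have hj : (j : ℕ) ≠ j' := fun h => hne (by rw [Fin.ext h])
      exact (hu i).pairwise_disjoint_on_Ioo_succ hj
    · exact ((disjoint_iff_inter_eq_empty.2 (hdisj hi)).mono
        (Ioo_subset_Ioo (hpiece i j).1 (hpiece i j).2)
        (Ioo_subset_Ioo (hpiece i' j').1 (hpiece i' j').2))
  · calc ∑ x : Σ i, Fin (k i), (u x.1 (x.2 + 1) - u x.1 x.2) = ∑ i, (b i - a i) := by
          rw [Fintype.sum_sigma]
          refine Finset.sum_congr rfl fun i _ => ?_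
          rw [Fin.sum_univ_eq_sum_range (fun j => u i (j + 1) - u i j), Finset.sum_range_sub,
            huk, hu0]
      _ < δ := hlen

theorem AbsolutelyContinuousOn.absolutelyContinuousOnInterval (hf : AbsolutelyContinuousOn f s)
    {a b : ℝ} (hab : uIcc a b ⊆ s) : AbsolutelyContinuousOnInterval f a b := by
  rw [absolutelyContinuousOnInterval_iff]
  intro ε hε
  obtain ⟨δ, hδ, hf⟩ := hf.exists_pos_forall_fintype hε
  refine ⟨δ, hδ, fun ⟨n, I⟩ ⟨hI, hdisj⟩ hlen => ?_⟩
  have hmem (i : Fin n) : uIcc (I i).1 (I i).2 ⊆ s :=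
    have hIi := hI i (Finset.mem_range.2 i.isLt)
    (uIcc_subset_uIcc hIi.1 hIi.2).trans hab
  have := hf (Fin n) (fun i => min (I i).1 (I i).2) (fun i => max (I i).1 (I i).2)
    (fun i => min_le_max) (fun i => hmem i) ?_ ?_
  · rw [Finset.sum_range (fun i => dist (f (I i).1) (f (I i).2))]
    convert this using 2 with i
    rcases le_total (I i).1 (I i).2 with h | h
    · simp [h, dist_eq_norm, norm_sub_rev]
    · simp [h, dist_eq_norm]
  · intro i j hij
    exact (hdisj (Finset.mem_range.2 i.isLt) (Finset.mem_range.2 j.isLt)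
      (Fin.val_ne_of_ne hij)).mono Ioo_subset_Ioc_self Ioo_subset_Ioc_self
  · rw [Finset.sum_range (fun i => dist (I i).1 (I i).2)] at hlen
    simpa [max_sub_min_eq_abs', Real.dist_eq] using hlen

theorem AbsolutelyContinuousOn.locallyBoundedVariationOn (hf : AbsolutelyContinuousOn f s)
    (hs : s.OrdConnected) : LocallyBoundedVariationOn f s := fun _ _ ha hb =>
  ((hf.absolutelyContinuousOnInterval (hs.uIcc_subset ha hb)).boundedVariationOn).mono
    (inter_subset_right.trans Icc_subset_uIcc)

theorem AbsolutelyContinuousOn.ae_differentiableAt [NormedSpace ℝ E] [FiniteDimensional ℝ E]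
    (hf : AbsolutelyContinuousOn f s) (hs : IsOpen s) (hs' : s.OrdConnected) :
    ∀ᵐ t ∂volume.restrict s, DifferentiableAt ℝ f t := by
  filter_upwards [(hf.locallyBoundedVariationOn hs').ae_differentiableWithinAt hs.measurableSet,
    ae_restrict_mem hs.measurableSet] with t ht hts
  exact ht.differentiableAt (hs.mem_nhds hts)

end AbsolutelyContinuous

section Deriv

variable {E F : Type*} [NormedAddCommGroup E] [NormedSpace ℝ E] [NormedAddCommGroup F]
  [NormedSpace ℝ F]

theorem HasDerivAt.eq_of_eqOn_of_accPt {f g : ℝ → F} {f' g' : F} {s : Set ℝ} {t : ℝ}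
    (hf : HasDerivAt f f' t) (hg : HasDerivAt g g' t) (hfg : EqOn f g s) (ht : t ∈ s)
    (hacc : AccPt t (𝓟 s)) : f' = g' :=
  hacc.uniqueDiffWithinAt.eq_deriv s hf.hasDerivWithinAt
    (hg.hasDerivWithinAt.congr_of_mem (fun _ hx => hfg hx) ht)

theorem ae_exists_eq_and_deriv_eq {ι : Type*} [Countable ι] (L : ι → E →L[ℝ] F)
    {f₁ : ℝ → E} {f₂ : ℝ → F} {μ : Measure ℝ} (hμ : μ ≪ volume)
    (h : ∀ᵐ t ∂μ, ∃ i, f₂ t = L i (f₁ t)) (hd₁ : ∀ᵐ t ∂μ, DifferentiableAt ℝ f₁ t)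
    (hd₂ : ∀ᵐ t ∂μ, DifferentiableAt ℝ f₂ t) :
    ∀ᵐ t ∂μ, ∃ i, f₂ t = L i (f₁ t) ∧ deriv f₂ t = L i (deriv f₁ t) := by
  set A : ι → Set ℝ := fun i => {t | f₂ t = L i (f₁ t)}
  have hisolated : ∀ᵐ t ∂μ, ∀ i, t ∈ A i → (𝓝[A i ∩ Ioi t] t).NeBot := by
    refine ae_all_iff.2 fun i => hμ.ae_le ?_
    filter_upwards [measure_eq_zero_iff_ae_notMem.1
      ((countable_setOfPred_isolated_right_within (s := A i)).measure_zero volume)] with t ht hti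
    exact ⟨fun h => ht ⟨hti, h⟩⟩
  filter_upwards [h, hd₁, hd₂, hisolated] with t ⟨i, hi⟩ ht₁ ht₂ hacc
  refine ⟨i, hi, HasDerivAt.eq_of_eqOn_of_accPt ht₂.hasDerivAt
    ((L i).hasFDerivAt.comp_hasDerivAt t ht₁.hasDerivAt) (fun x hx => hx) hi ?_⟩
  exact accPt_principal_iff_nhdsWithin.2 ((hacc i hi).mono
    (nhdsWithin_mono t fun x hx => ⟨hx.1, (ne_of_gt hx.2 : x ≠ t)⟩))

end Deriv

theorem exists_pos_lipschitzWith_of_finite {ι 𝕜 E F : Type*} [Finite ι]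
    [NontriviallyNormedField 𝕜] [SeminormedAddCommGroup E] [SeminormedAddCommGroup F]
    [NormedSpace 𝕜 E] [NormedSpace 𝕜 F] (L : ι → E →L[𝕜] F) :
    ∃ K : ℝ≥0, 0 < K ∧ ∀ i, LipschitzWith K (L i) := by
  obtain ⟨K, hK⟩ := (finite_range fun i => ‖L i‖₊).bddAbove
  exact ⟨K + 1, by positivity, fun i => (L i).lipschitz.weaken
    ((hK (mem_range_self i)).trans (le_add_of_nonneg_right zero_le_one))⟩

theorem comparison_of_lifts_general
    {G : Type} [Group G] [Fintype G] {N n : ℕ}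
    (ρ : Representation ℂ G (Fin N → ℂ))
    (σ : Fin n → MvPolynomial (Fin N) ℂ)
    (hbasic : IsBasicInvariantSystem ρ σ) :
    ∃ C : ℝ, 0 < C ∧
      ∀ α β : ℝ, α < β →
      ∀ c : ℝ → Fin n → ℂ, ContinuousOn c (Set.Ioo α β) →
        (∀ t ∈ Set.Ioo α β, c t ∈ Set.range (polyMap σ)) →
      ∀ cbar₁ cbar₂ : ℝ → Fin N → ℂ,
        ContinuousOn cbar₁ (Set.Ioo α β) → ContinuousOn cbar₂ (Set.Ioo α β) →
        (∀ t ∈ Set.Ioo α β, polyMap σ (cbar₁ t) = c t) →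
        (∀ t ∈ Set.Ioo α β, polyMap σ (cbar₂ t) = c t) →
      ∀ p : ℝ≥0∞, 1 ≤ p →
        AbsolutelyContinuousOn cbar₁ (Set.Ioo α β) →
        MemLp cbar₁ p (volume.restrict (Set.Ioo α β)) →
        MemLp (deriv cbar₁) p (volume.restrict (Set.Ioo α β)) →
        AbsolutelyContinuousOn cbar₂ (Set.Ioo α β) ∧
        MemLp cbar₂ p (volume.restrict (Set.Ioo α β)) ∧
        MemLp (deriv cbar₂) p (volume.restrict (Set.Ioo α β)) ∧
        eLpNorm (deriv cbar₂) p (volume.restrict (Set.Ioo α β)) ≤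
          ENNReal.ofReal C * eLpNorm (deriv cbar₁) p (volume.restrict (Set.Ioo α β)) ∧
        ∀ᵐ t ∂(volume.restrict (Set.Ioo α β)), ∃ g : G,
          ρ g (cbar₁ t) = cbar₂ t ∧ ρ g (deriv cbar₁ t) = deriv cbar₂ t := by
  let L : G → (Fin N → ℂ) →L[ℝ] Fin N → ℂ :=
    fun g => (LinearMap.toContinuousLinearMap (ρ g)).restrictScalars ℝ
  obtain ⟨K, hK, hLK⟩ := exists_pos_lipschitzWith_of_finite L
  have hnorm (g : G) (v : Fin N → ℂ) : ‖L g v‖ ≤ K * ‖v‖ := (hLK g).norm_le_mul (map_zero _) v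
  refine ⟨K, hK, fun α β _ c _ _ cbar₁ cbar₂ hc₁ hc₂ hl₁ hl₂ p _ hac₁ hmem₁ hmem₁' => ?_⟩
  have horbit (t : ℝ) (ht : t ∈ Ioo α β) : ∃ g, cbar₂ t = L g (cbar₁ t) := by
    obtain ⟨g, hg⟩ := hbasic.exists_eq_of_polyMap_eq ((hl₁ t ht).trans (hl₂ t ht).symm)
    exact ⟨g, hg.symm⟩
  have hac₂ := hac₁.of_forall_exists_eq_comp hLK hc₁ hc₂ horbit
  have hmatch := ae_exists_eq_and_deriv_eq L Measure.restrict_le_self.absolutelyContinuous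
    ((ae_restrict_iff' measurableSet_Ioo).2 (ae_of_all _ horbit))
    (hac₁.ae_differentiableAt isOpen_Ioo ordConnected_Ioo)
    (hac₂.ae_differentiableAt isOpen_Ioo ordConnected_Ioo)
  have hvalue_le : ∀ᵐ t ∂volume.restrict (Ioo α β), ‖cbar₂ t‖ ≤ K * ‖cbar₁ t‖ :=
    hmatch.mono fun t ⟨g, hg, _⟩ => hg ▸ hnorm g _
  have hderiv_le : ∀ᵐ t ∂volume.restrict (Ioo α β), ‖deriv cbar₂ t‖ ≤ K * ‖deriv cbar₁ t‖ :=
    hmatch.mono fun t ⟨g, _, hg⟩ => hg ▸ hnorm g _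
  exact ⟨hac₂, hmem₁.of_le_mul (hc₂.aestronglyMeasurable measurableSet_Ioo) hvalue_le,
    hmem₁'.of_le_mul (stronglyMeasurable_deriv cbar₂).aestronglyMeasurable hderiv_le,
    eLpNorm_le_mul_eLpNorm_of_ae_le_mul hderiv_le p,
    hmatch.mono fun t ⟨g, hg, hg'⟩ => ⟨g, hg.symm, hg'.symm⟩⟩

/-- **Comparison of two continuous lifts.**
Let `c̄_1, c̄_2` be continuous lifts over `σ` of a curve `c : I → σ(V)` on a bounded
interval `I = (α,β)`.  There is a constant `C`, depending only on the representation
(with `σ`) and the chosen norm on `V`, such that: if `c̄_1` is absolutely continuous and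
belongs to `W^{1,p}(I,V)` for some `1 ≤ p ≤ ∞`, then `c̄_2` is absolutely continuous,
belongs to `W^{1,p}(I,V)`, and `‖c̄_2′‖_{L^p(I)} ≤ C ‖c̄_1′‖_{L^p(I)}`; moreover at
almost every `t` the derivatives are matched by a group element:
`c̄_2(t) = g c̄_1(t)` and `c̄_2′(t) = g c̄_1′(t)` for some `g ∈ G`. -/
theorem comparison_of_lifts
    {G : Type} [Group G] [Fintype G] {N n : ℕ}
    (ρ : Representation ℂ G (Fin N → ℂ))
    (σ : Fin n → MvPolynomial (Fin N) ℂ)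
    (dd : Fin n → ℕ)
    (hbasic : IsBasicInvariantSystem ρ σ)
    (hhom : ∀ j, (σ j).IsHomogeneous (dd j)) :
    ∃ C : ℝ, 0 < C ∧
      ∀ α β : ℝ, α < β →
      ∀ c : ℝ → Fin n → ℂ, ContinuousOn c (Set.Ioo α β) →
        (∀ t ∈ Set.Ioo α β, c t ∈ Set.range (polyMap σ)) →
      ∀ cbar₁ cbar₂ : ℝ → Fin N → ℂ,
        ContinuousOn cbar₁ (Set.Ioo α β) → ContinuousOn cbar₂ (Set.Ioo α β) →
        (∀ t ∈ Set.Ioo α β, polyMap σ (cbar₁ t) = c t) →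
        (∀ t ∈ Set.Ioo α β, polyMap σ (cbar₂ t) = c t) →
      ∀ p : ℝ≥0∞, 1 ≤ p →
        AbsolutelyContinuousOn cbar₁ (Set.Ioo α β) →
        MemLp cbar₁ p (volume.restrict (Set.Ioo α β)) →
        MemLp (deriv cbar₁) p (volume.restrict (Set.Ioo α β)) →
        AbsolutelyContinuousOn cbar₂ (Set.Ioo α β) ∧
        MemLp cbar₂ p (volume.restrict (Set.Ioo α β)) ∧
        MemLp (deriv cbar₂) p (volume.restrict (Set.Ioo α β)) ∧
        eLpNorm (deriv cbar₂) p (volume.restrict (Set.Ioo α β)) ≤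
          ENNReal.ofReal C * eLpNorm (deriv cbar₁) p (volume.restrict (Set.Ioo α β)) ∧
        ∀ᵐ t ∂(volume.restrict (Set.Ioo α β)), ∃ g : G,
          ρ g (cbar₁ t) = cbar₂ t ∧ ρ g (deriv cbar₁ t) = deriv cbar₂ t :=
  comparison_of_lifts_general ρ σ hbasic
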